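/- Let b be a positive integer, m, a ∈ ℤ, and σ ∈ {1, -1}. Set τ(u) = (b/(2πi))·log u for u in the punctured unit disc Δ* (principal branch of log), so that Im(τ(u)) = -(b/(2π))·log|u| > 0. Let h : Δ → ℂ be continuous on the open unit disc Δ, and define s(u) = h(u) + (a/(2πi))·log u for u ∈ Δ*. Then there exists a continuous function h' : Δ → ℂ such that for all u ∈ Δ*: σ·s(u) + m·Im(s(u))/Im(τ(u)) = h'(u) + σ·(a/(2πi))·log u. Moreover one can take h'(u) = σ·h(u) + m·a/b + m·Im(h(u))/Im(τ(u)) for u ≠ 0 and h'(0) = σ·h(0) + m·a/b. -/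

import Mathlib

/-!
Put `r = a / b`. The logarithmic term of `s` is `r τ`, and since `Im (r τ) / Im τ = r`, the
fibrewise map `T v = σ v + m Im v / Im τ` sends `v + r τ` to `T v + m r + σ r τ`. Hence
`h' = T ∘ h + m r`, and it remains to see that `h'` is continuous at `0`: there
`Im τ(u) = -(b / 2π) log ‖u‖ → +∞`, i.e. `x ↦ (log x)⁻¹` is continuous at `0`, where Mathlib's
junk values `log 0 = 0` and `0⁻¹ = 0` happen to give the right limit.
-/

open Complex

theorem Real.continuousAt_inv_log_zero : ContinuousAt (fun x ↦ (Real.log x)⁻¹) 0 := by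
  rw [← continuousWithinAt_compl_self, ContinuousWithinAt, Real.log_zero, inv_zero]
  exact tendsto_inv_atBot_zero.comp Real.tendsto_log_nhdsNE_zero

theorem Real.continuousOn_inv_log : ContinuousOn (fun x ↦ (Real.log x)⁻¹) {1, -1}ᶜ := by
  intro x hx
  rcases eq_or_ne x 0 with rfl | hx₀
  · exact Real.continuousAt_inv_log_zero.continuousWithinAt
  · simp only [Set.mem_compl_iff, Set.mem_insert_iff, Set.mem_singleton_iff, not_or] at hx
    exact ((Real.continuousAt_log hx₀).inv₀ (Real.log_ne_zero.2 ⟨hx₀, hx⟩)).continuousWithinAt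

theorem continuousOn_inv_log_norm {E : Type*} [SeminormedAddCommGroup E] :
    ContinuousOn (fun u : E ↦ (Real.log ‖u‖)⁻¹) {u | ‖u‖ ≠ 1} :=
  Real.continuousOn_inv_log.comp continuous_norm.continuousOn fun u hu ↦ by
    simp only [Set.mem_compl_iff, Set.mem_insert_iff, Set.mem_singleton_iff, not_or]
    exact ⟨hu, by linarith [norm_nonneg u]⟩

theorem im_div_two_pi_I_mul_log (c : ℝ) (u : ℂ) :
    ((c : ℂ) / (2 * Real.pi * I) * log u).im = -(c / (2 * Real.pi)) * Real.log ‖u‖ := by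
  have : (c : ℂ) / (2 * Real.pi * I) = ((-(c / (2 * Real.pi)) : ℝ) : ℂ) * I := by
    push_cast
    field_simp
    rw [I_sq]; ring
  rw [this, mul_assoc, im_ofReal_mul, I_mul_im, log_re]

theorem mapping_class_add_real_mul (σ : ℂ) (m r : ℝ) (v : ℂ) {t : ℂ} (ht : t.im ≠ 0) :
    σ * (v + r * t) + ((m * (v + r * t).im / t.im : ℝ) : ℂ)
      = σ * v + m * r + ((m * v.im / t.im : ℝ) : ℂ) + σ * (r * t) := by
  have : m * (v + r * t).im / t.im = m * v.im / t.im + m * r := by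
    rw [add_im, im_ofReal_mul]
    field_simp
  rw [this]
  push_cast
  ring

theorem mapping_class_preserves_sections_general (b : ℕ) (hb : 0 < b) (m a : ℤ)
    (σ : ℤ) (τ : ℂ → ℂ)
    (hτ : ∀ u : ℂ, τ u = (b : ℂ) / (2 * Real.pi * Complex.I) * Complex.log u)
    (h : ℂ → ℂ) (hcont : ContinuousOn h {u : ℂ | ‖u‖ < 1})
    (s : ℂ → ℂ)
    (hs : ∀ u : ℂ, s u = h u + (a : ℂ) / (2 * Real.pi * Complex.I) * Complex.log u) :
    ∃ h' : ℂ → ℂ, ContinuousOn h' {u : ℂ | ‖u‖ < 1} ∧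
      (∀ u : ℂ, 0 < ‖u‖ → ‖u‖ < 1 →
        (σ : ℂ) * s u + (((m : ℝ) * (s u).im / (τ u).im : ℝ) : ℂ)
          = h' u + (σ : ℂ) * ((a : ℂ) / (2 * Real.pi * Complex.I)) * Complex.log u) ∧
      (∀ u : ℂ, 0 < ‖u‖ → ‖u‖ < 1 →
        h' u = (σ : ℂ) * h u + (m : ℂ) * (a : ℂ) / (b : ℂ)
          + (((m : ℝ) * (h u).im / (τ u).im : ℝ) : ℂ)) ∧
      h' 0 = (σ : ℂ) * h 0 + (m : ℂ) * (a : ℂ) / (b : ℂ) := by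
  have hb₀ : (b : ℂ) ≠ 0 := by simp [hb.ne']
  have hτ_im (u : ℂ) : (τ u).im = -(b / (2 * Real.pi)) * Real.log ‖u‖ := by
    rw [hτ]
    exact_mod_cast im_div_two_pi_I_mul_log b u
  have hlog (u : ℂ) : (a : ℂ) / (2 * Real.pi * I) * log u = ((a / b : ℝ) : ℂ) * τ u := by
    rw [hτ]
    push_cast
    field_simp
  have hτ_im_ne {u : ℂ} (h₀ : 0 < ‖u‖) (h₁ : ‖u‖ < 1) : (τ u).im ≠ 0 := by
    rw [hτ_im]
    exact mul_ne_zero (by simp [hb.ne', Real.pi_ne_zero]) (Real.log_neg h₀ h₁).ne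
  have hτ_inv : ContinuousOn (fun u ↦ ((τ u).im)⁻¹) {u : ℂ | ‖u‖ < 1} := by
    simp only [hτ_im, mul_inv]
    exact continuousOn_const.mul (continuousOn_inv_log_norm.mono fun u hu ↦ hu.ne)
  refine ⟨fun u ↦ σ * h u + m * a / b + ((m * (h u).im / (τ u).im : ℝ) : ℂ), ?_,
    fun u h₀ h₁ ↦ ?_, fun _ _ _ ↦ rfl, by simp [hτ_im]⟩
  · simp only [div_eq_mul_inv _ (τ _).im]
    fun_prop
  · rw [hs, hlog, mapping_class_add_real_mul _ _ _ _ (hτ_im_ne h₀ h₁), mul_assoc _ _ (log u), hlog]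
    push_cast
    ring

/-- The fibrewise mapping-class transformation
`v ↦ σ·v + m·Im(v)/Im(τ(u))` maps sections of the form `u ↦ h(u) + (a/(2πi))·log u`
(with `h` continuous on the unit disc) to sections of the same form: there is a
continuous `h'` with `σ·s(u) + m·Im(s(u))/Im(τ(u)) = h'(u) + σ·(a/(2πi))·log u` on the
punctured disc, and one may take
`h'(u) = σ·h(u) + m·a/b + m·Im(h(u))/Im(τ(u))` for `u ≠ 0`, `h'(0) = σ·h(0) + m·a/b`. -/
theorem mapping_class_preserves_sections (b : ℕ) (hb : 0 < b) (m a : ℤ)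
    (σ : ℤ) (hσ : σ = 1 ∨ σ = -1) (τ : ℂ → ℂ)
    (hτ : ∀ u : ℂ, τ u = (b : ℂ) / (2 * Real.pi * Complex.I) * Complex.log u)
    (h : ℂ → ℂ) (hcont : ContinuousOn h {u : ℂ | ‖u‖ < 1})
    (s : ℂ → ℂ)
    (hs : ∀ u : ℂ, s u = h u + (a : ℂ) / (2 * Real.pi * Complex.I) * Complex.log u) :
    ∃ h' : ℂ → ℂ, ContinuousOn h' {u : ℂ | ‖u‖ < 1} ∧
      (∀ u : ℂ, 0 < ‖u‖ → ‖u‖ < 1 →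
        (σ : ℂ) * s u + (((m : ℝ) * (s u).im / (τ u).im : ℝ) : ℂ)
          = h' u + (σ : ℂ) * ((a : ℂ) / (2 * Real.pi * Complex.I)) * Complex.log u) ∧
      (∀ u : ℂ, 0 < ‖u‖ → ‖u‖ < 1 →
        h' u = (σ : ℂ) * h u + (m : ℂ) * (a : ℂ) / (b : ℂ)
          + (((m : ℝ) * (h u).im / (τ u).im : ℝ) : ℂ)) ∧
      h' 0 = (σ : ℂ) * h 0 + (m : ℂ) * (a : ℂ) / (b : ℂ) :=
  mapping_class_preserves_sections_general b hb m a σ τ hτ h hcont s hs
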